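/- Let F be a commutative perfect semi-field of characteristic 1 satisfying Assumptions 1 and 2 which is Banach, and let X ∈ F with X ≠ 0. Then there exists φ ∈ S_E(F) such that |φ(X)| = r(X). In particular S_E(F) is non-empty. -/

import Mathlib

/-!
For `X ≤ Y ↔ X ⊕ Y = Y`, `F` is a lattice-ordered abelian group in which `E` is a strong order
unit. Let `h Y` be the infimum of the rationals `q` with `Y ≤ q • E`; then `h` is sublinear, turns
`⊕` into `max`, and `r Y = max (h Y) (h (-Y))`. Pick `W = ±X` with `h W = r X`.

Pointwise infima of chains of such sublinear functionals are again such, so by Zorn's lemma there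
is a minimal one below the directional derivative of `h` at `W`. A minimal one is additive: its
directional derivative in a direction `Z` lies below it, hence equals it, and is additive along
`Z`. The resulting character `φ` satisfies `φ ≤ h`, `φ (-W) ≤ -h W`, hence `φ E = 1` and
`φ W = h W = r X`.
-/

open scoped Pointwise

/-- A commutative perfect semi-field of characteristic `1`: an abelian group `(F, +, 0)`
together with a commutative, associative, idempotent operation `⊕` over which `+`
distributes, and such that `X ↦ n • X` is surjective for every `n > 0`. -/
class CharOneSemifield (F : Type*) extends AddCommGroup F where
  oplus : F → F → F
  oplus_comm : ∀ X Y : F, oplus X Y = oplus Y X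
  oplus_assoc : ∀ X Y Z : F, oplus (oplus X Y) Z = oplus X (oplus Y Z)
  oplus_idem : ∀ X : F, oplus X X = X
  add_oplus : ∀ X Y Z : F, X + oplus Y Z = oplus (X + Y) (X + Z)
  perfect : ∀ n : ℕ, 0 < n → Function.Surjective (fun X : F => n • X)

namespace CharOneSemifield

variable {F : Type*} [CharOneSemifield F]

/-- The canonical partial order on `F`: `X ≤ Y` iff `X ⊕ Y = Y`. -/
def cle (X Y : F) : Prop := oplus X Y = Y

/-- Assumption 1: every element is dominated by (rational multiples of) `E`:
for every `X` there are naturals `a, b` with `b > 0` and `-(a • E) ≤ b • X ≤ a • E`. -/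
def Assumption1 (E : F) : Prop :=
  ∀ X : F, ∃ a b : ℕ, 0 < b ∧ cle (-(a • E)) (b • X) ∧ cle (b • X) (a • E)

/-- `rval E X` is the infimum in `ℝ` of the ratios `a / b` over the pairs of naturals
`(a, b)` with `b > 0` and `-(a • E) ≤ b • X ≤ a • E`. -/
noncomputable def rval (E X : F) : ℝ :=
  sInf {t : ℝ | ∃ a b : ℕ, 0 < b ∧ t = (a : ℝ) / (b : ℝ) ∧
    cle (-(a • E)) (b • X) ∧ cle (b • X) (a • E)}

/-- Assumption 2: `r(X) = 0` implies `X = 0`. -/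
def Assumption2 (E : F) : Prop := ∀ X : F, rval E X = 0 → X = 0

/-- `F` is Banach if it is (sequentially) complete for the metric `(X, Y) ↦ r (X - Y)`. -/
def IsBanach (E : F) : Prop :=
  ∀ u : ℕ → F,
    (∀ ε : ℝ, 0 < ε → ∃ N : ℕ, ∀ m ≥ N, ∀ n ≥ N, rval E (u m - u n) < ε) →
    ∃ L : F, ∀ ε : ℝ, 0 < ε → ∃ N : ℕ, ∀ n ≥ N, rval E (u n - L) < ε

/-- A character of `F`: a map `φ : F → ℝ`, not identically zero, turning `⊕` into `max`
and `+` into `+`. -/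
def IsChar (φ : F → ℝ) : Prop :=
  (∃ X : F, φ X ≠ 0) ∧
  (∀ X Y : F, φ (oplus X Y) = max (φ X) (φ Y)) ∧
  (∀ X Y : F, φ (X + Y) = φ X + φ Y)

/-- The spectrum `S_E(F)`: the set of characters normalized by `φ E = 1`, viewed as a
subset of the product space `F → ℝ` (topology of pointwise convergence). -/
def specE (E : F) : Set (F → ℝ) := {φ : F → ℝ | IsChar φ ∧ φ E = 1}

/-- A congruence on `F`: an equivalence relation compatible with `-`, `+` and `⊕`. -/
structure IsCongruence (r : F → F → Prop) : Prop where
  equiv : Equivalence r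
  neg_compat : ∀ {X Y : F}, r X Y → r (-X) (-Y)
  add_compat : ∀ {X Y : F} (Z : F), r X Y → r (X + Z) (Y + Z)
  oplus_compat : ∀ {X Y : F} (Z : F), r X Y → r (oplus X Z) (oplus Y Z)

/-- A maximal congruence: a non-trivial congruence such that every coarser congruence is
either equal to it or trivial. -/
def IsMaximalCongruence (rel : F → F → Prop) : Prop :=
  IsCongruence rel ∧ (¬ ∀ X Y : F, rel X Y) ∧
  ∀ s : F → F → Prop, IsCongruence s → (∀ X Y : F, rel X Y → s X Y) →
    (∀ X Y : F, s X Y ↔ rel X Y) ∨ (∀ X Y : F, s X Y)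

end CharOneSemifield

open CharOneSemifield


section LatticeOrderedGroup

variable {α : Type*} [AddCommGroup α] [Lattice α] [IsOrderedAddMonoid α]

lemma nsmul_inf_eq_zero {x y : α} (hx : 0 ≤ x) (hy : 0 ≤ y) (h : x ⊓ y = 0) (n : ℕ) :
    n • x ⊓ y = 0 := by
  induction n with
  | zero => simpa using hy
  | succ n ih =>
    refine le_antisymm ?_ (le_inf (nsmul_nonneg hx _) hy)
    have hle : (n + 1) • x ⊓ y ≤ x :=
      calc (n + 1) • x ⊓ y ≤ (n • x + x) ⊓ (y + x) :=
            inf_le_inf (succ_nsmul x n).le (le_add_of_nonneg_right hx)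
        _ = x := by rw [← inf_add, ih, zero_add]
    exact h ▸ le_inf hle inf_le_right

lemma nonneg_of_nsmul_nonneg {n : ℕ} (hn : n ≠ 0) {a : α} (h : 0 ≤ n • a) : 0 ≤ a := by
  have hle : a⁻ ≤ n • a⁺ :=
    calc a⁻ ≤ n • a⁻ := le_self_nsmul (negPart_nonneg a) hn
      _ ≤ n • a⁺ := by rwa [← sub_nonneg, ← nsmul_sub, posPart_sub_negPart]
  rw [← negPart_eq_zero, ← inf_eq_left.mpr hle, inf_comm,
    nsmul_inf_eq_zero (posPart_nonneg a) (negPart_nonneg a) (posPart_inf_negPart_eq_zero a)]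

lemma nsmul_le_nsmul_iff_of_ne_zero {n : ℕ} (hn : n ≠ 0) {a b : α} : n • a ≤ n • b ↔ a ≤ b :=
  ⟨fun h => sub_nonneg.mp (nonneg_of_nsmul_nonneg hn (by rwa [nsmul_sub, sub_nonneg])),
    fun h => nsmul_le_nsmul_right h n⟩

lemma nsmul_posPart (n : ℕ) (a : α) : (n • a)⁺ = n • a⁺ := by
  have hdisj : n • a⁻ ⊓ n • a⁺ = 0 :=
    nsmul_inf_eq_zero (negPart_nonneg a) (nsmul_nonneg (posPart_nonneg a) n) (by
      rw [inf_comm, nsmul_inf_eq_zero (posPart_nonneg a) (negPart_nonneg a)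
        (posPart_inf_negPart_eq_zero a)]) n
  conv_lhs => rw [← posPart_sub_negPart a, nsmul_sub]
  rw [posPart_def, ← sub_self (n • a⁺), ← sub_inf, hdisj, sub_zero]

lemma nsmul_sup (n : ℕ) (a b : α) : n • (a ⊔ b) = n • a ⊔ n • b := by
  rw [sup_eq_add_posPart_sub, sup_eq_add_posPart_sub (n • a), nsmul_add, ← nsmul_sub,
    nsmul_posPart]

lemma nonneg_of_zsmul_nonneg {E : α} (hE : 0 ≤ E) (hE0 : E ≠ 0) {k : ℤ} (h : 0 ≤ k • E) :
    0 ≤ k := by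
  by_contra! hk
  obtain ⟨m, rfl⟩ : ∃ m : ℕ, k = -m := ⟨k.natAbs, by omega⟩
  rw [neg_smul, natCast_zsmul, neg_nonneg, ← nsmul_zero m,
    nsmul_le_nsmul_iff_of_ne_zero (by omega)] at h
  exact hE0 (le_antisymm h hE)

end LatticeOrderedGroup

lemma le_max_ciInf_ciInf {β ι κ : Type*} [ConditionallyCompleteLinearOrder β] [DenselyOrdered β]
    [Nonempty ι] [Nonempty κ] {f : ι → β} {g : κ → β} {a : β}
    (h : ∀ i j, a ≤ max (f i) (g j)) : a ≤ max (⨅ i, f i) (⨅ j, g j) :=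
  le_of_forall_gt_imp_ge_of_dense fun c hc => by
    obtain ⟨i, hi⟩ := exists_lt_of_ciInf_lt (lt_of_le_of_lt (le_max_left _ _) hc)
    obtain ⟨j, hj⟩ := exists_lt_of_ciInf_lt (lt_of_le_of_lt (le_max_right _ _) hc)
    exact (h i j).trans (max_le hi.le hj.le)

section SupSublinear

variable {α : Type*} [AddCommGroup α] [Lattice α] {ψ : α → ℝ}

structure IsSupSublinear (ψ : α → ℝ) : Prop where
  map_sup : ∀ x y, ψ (x ⊔ y) = max (ψ x) (ψ y)
  map_add_le : ∀ x y, ψ (x + y) ≤ ψ x + ψ y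
  map_nsmul : ∀ (n : ℕ) x, ψ (n • x) = n * ψ x

lemma IsSupSublinear.map_zero (hψ : IsSupSublinear ψ) : ψ 0 = 0 := by
  simpa using hψ.map_nsmul 0 0

lemma IsSupSublinear.neg_neg_le (hψ : IsSupSublinear ψ) (x : α) : -ψ (-x) ≤ ψ x := by
  have := hψ.map_add_le x (-x)
  rw [add_neg_cancel, hψ.map_zero] at this
  linarith

/-- Since `ψ (y + n • z) - n * ψ z = n * (ψ (z + y / n) - ψ z)` when `y / n` makes sense, this is
the directional derivative of `ψ` at `z` in the direction `y`. -/
noncomputable def dirDeriv (ψ : α → ℝ) (z y : α) : ℝ :=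
  ⨅ n : ℕ, (ψ (y + n • z) - n * ψ z)

namespace IsSupSublinear

lemma antitone_dirDeriv_seq (hψ : IsSupSublinear ψ) (z y : α) :
    Antitone fun n : ℕ => ψ (y + n • z) - n * ψ z :=
  antitone_nat_of_succ_le fun n => by
    have := hψ.map_add_le (y + n • z) z
    rw [add_assoc, ← succ_nsmul] at this
    push_cast
    linarith

lemma neg_neg_le_dirDeriv_seq (hψ : IsSupSublinear ψ) (z y : α) (n : ℕ) :
    -ψ (-y) ≤ ψ (y + n • z) - n * ψ z := by
  have := hψ.map_add_le (y + n • z) (-y)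
  rw [add_neg_cancel_comm, hψ.map_nsmul] at this
  linarith

lemma dirDeriv_le_seq (hψ : IsSupSublinear ψ) (z y : α) (n : ℕ) :
    dirDeriv ψ z y ≤ ψ (y + n • z) - n * ψ z :=
  ciInf_le ⟨-ψ (-y), by rintro _ ⟨m, rfl⟩; exact hψ.neg_neg_le_dirDeriv_seq z y m⟩ n

lemma dirDeriv_le (hψ : IsSupSublinear ψ) (z y : α) : dirDeriv ψ z y ≤ ψ y := by
  simpa using hψ.dirDeriv_le_seq z y 0

lemma dirDeriv_add_self (hψ : IsSupSublinear ψ) (z y : α) :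
    dirDeriv ψ z (y + z) = dirDeriv ψ z y + ψ z := by
  have hshift (n : ℕ) :
      ψ (y + z + n • z) - n * ψ z = ψ (y + (n + 1) • z) - (n + 1 : ℕ) * ψ z + ψ z := by
    rw [add_assoc, ← succ_nsmul']
    push_cast
    ring
  refine le_antisymm ?_ ?_
  · rw [← sub_le_iff_le_add]
    conv_rhs => rw [dirDeriv]
    refine le_ciInf fun n => ?_
    have h := hψ.dirDeriv_le_seq z (y + z) n
    have h' : ψ (y + (n + 1) • z) - (n + 1 : ℕ) * ψ z ≤ ψ (y + n • z) - n * ψ z :=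
      hψ.antitone_dirDeriv_seq z y n.le_succ
    rw [hshift] at h
    linarith
  · conv_rhs => rw [dirDeriv]
    refine le_ciInf fun n => ?_
    have := hψ.dirDeriv_le_seq z y (n + 1)
    rw [hshift]
    linarith

lemma dirDeriv_sup [IsOrderedAddMonoid α] (hψ : IsSupSublinear ψ) (z y y' : α) :
    dirDeriv ψ z (y ⊔ y') = max (dirDeriv ψ z y) (dirDeriv ψ z y') := by
  have hseq (n : ℕ) : ψ (y ⊔ y' + n • z) - n * ψ z =
      max (ψ (y + n • z) - n * ψ z) (ψ (y' + n • z) - n * ψ z) := by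
    rw [sup_add, hψ.map_sup, max_sub_sub_right]
  refine le_antisymm (le_max_ciInf_ciInf fun n m => ?_) (le_ciInf fun n => ?_)
  · calc dirDeriv ψ z (y ⊔ y') ≤ ψ (y ⊔ y' + (max n m) • z) - (max n m : ℕ) * ψ z :=
          hψ.dirDeriv_le_seq z _ _
      _ ≤ _ := by
          rw [hseq]
          exact max_le_max (hψ.antitone_dirDeriv_seq z y (le_max_left n m))
            (hψ.antitone_dirDeriv_seq z y' (le_max_right n m))
  · rw [hseq]
    exact max_le_max (hψ.dirDeriv_le_seq z y n) (hψ.dirDeriv_le_seq z y' n)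

lemma dirDeriv_add_le (hψ : IsSupSublinear ψ) (z y y' : α) :
    dirDeriv ψ z (y + y') ≤ dirDeriv ψ z y + dirDeriv ψ z y' :=
  le_ciInf_add_ciInf fun n m => by
    have h := hψ.dirDeriv_le_seq z (y + y') (n + m)
    have := hψ.map_add_le (y + n • z) (y' + m • z)
    rw [show y + n • z + (y' + m • z) = y + y' + (n + m) • z by rw [add_nsmul]; abel] at this
    push_cast at h
    linarith

lemma dirDeriv_nsmul (hψ : IsSupSublinear ψ) (z : α) (k : ℕ) (y : α) :
    dirDeriv ψ z (k • y) = k * dirDeriv ψ z y := by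
  rcases eq_or_ne k 0 with rfl | hk
  · simp [dirDeriv, hψ.map_nsmul]
  have hseq (n : ℕ) : ψ (k • y + (k * n) • z) - (k * n : ℕ) * ψ z =
      k * (ψ (y + n • z) - n * ψ z) := by
    rw [mul_nsmul', ← nsmul_add, hψ.map_nsmul]
    push_cast
    ring
  refine le_antisymm ?_ ?_
  · conv_rhs => rw [dirDeriv, Real.mul_iInf_of_nonneg (Nat.cast_nonneg k)]
    exact le_ciInf fun n => (hψ.dirDeriv_le_seq z _ (k * n)).trans (hseq n).le
  · refine le_ciInf fun n => ?_
    calc (k : ℝ) * dirDeriv ψ z y ≤ k * (ψ (y + n • z) - n * ψ z) :=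
          mul_le_mul_of_nonneg_left (hψ.dirDeriv_le_seq z y n) (Nat.cast_nonneg k)
      _ = _ := (hseq n).symm
      _ ≤ _ := hψ.antitone_dirDeriv_seq z (k • y) (Nat.le_mul_of_pos_left n (Nat.pos_of_ne_zero hk))

protected lemma dirDeriv [IsOrderedAddMonoid α] (hψ : IsSupSublinear ψ) (z : α) :
    IsSupSublinear (dirDeriv ψ z) :=
  ⟨hψ.dirDeriv_sup z, hψ.dirDeriv_add_le z, hψ.dirDeriv_nsmul z⟩

end IsSupSublinear

end SupSublinear

lemma IsChain.exists_le_le {β : Type*} [Preorder β] {c : Set β} (hc : IsChain (· ≤ ·) c)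
    {b₁ b₂ : β} (h₁ : b₁ ∈ c) (h₂ : b₂ ∈ c) : ∃ b ∈ c, b ≤ b₁ ∧ b ≤ b₂ := by
  rcases hc.total h₁ h₂ with h | h
  exacts [⟨b₁, h₁, le_rfl, h⟩, ⟨b₂, h₂, h, le_rfl⟩]

section Zorn

variable {α : Type*} [AddCommGroup α] [Lattice α]

lemma IsChain.bddBelow_range_apply {c : Set (α → ℝ)} (hc : IsChain (· ≤ ·) c)
    (hcS : ∀ ψ ∈ c, IsSupSublinear ψ) {ψ₀ : α → ℝ} (hψ₀ : ψ₀ ∈ c) (x : α) :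
    BddBelow (Set.range fun ψ : c => (ψ : α → ℝ) x) := by
  refine ⟨-ψ₀ (-x), ?_⟩
  rintro _ ⟨⟨ψ, hψ⟩, rfl⟩
  rcases hc.total hψ hψ₀ with h | h
  · exact (neg_le_neg (h (-x))).trans ((hcS ψ hψ).neg_neg_le x)
  · exact ((hcS ψ₀ hψ₀).neg_neg_le x).trans (h x)

lemma IsChain.exists_isSupSublinear_le {c : Set (α → ℝ)} (hc : IsChain (· ≤ ·) c)
    (hcS : ∀ ψ ∈ c, IsSupSublinear ψ) {ψ₀ : α → ℝ} (hψ₀ : ψ₀ ∈ c) :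
    ∃ φ, IsSupSublinear φ ∧ ∀ ψ ∈ c, φ ≤ ψ := by
  have : Nonempty c := ⟨⟨ψ₀, hψ₀⟩⟩
  have hle (ψ : c) (x : α) : ⨅ ψ : c, (ψ : α → ℝ) x ≤ ψ.1 x :=
    ciInf_le (hc.bddBelow_range_apply hcS hψ₀ x) ψ
  refine ⟨fun x => ⨅ ψ : c, (ψ : α → ℝ) x,
    ⟨fun x y => le_antisymm ?_ ?_, fun x y => ?_, fun n x => ?_⟩, fun ψ hψ x => hle ⟨ψ, hψ⟩ x⟩
  · refine le_max_ciInf_ciInf fun ψ₁ ψ₂ => ?_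
    obtain ⟨ψ, hψ, h₁, h₂⟩ := hc.exists_le_le ψ₁.2 ψ₂.2
    calc _ ≤ ψ (x ⊔ y) := hle ⟨ψ, hψ⟩ _
      _ = max (ψ x) (ψ y) := (hcS ψ hψ).map_sup x y
      _ ≤ max (ψ₁.1 x) (ψ₂.1 y) := max_le_max (h₁ x) (h₂ y)
  · refine le_ciInf fun ψ => ?_
    rw [(hcS ψ ψ.2).map_sup]
    exact max_le_max (hle ψ x) (hle ψ y)
  · refine le_ciInf_add_ciInf fun ψ₁ ψ₂ => ?_
    obtain ⟨ψ, hψ, h₁, h₂⟩ := hc.exists_le_le ψ₁.2 ψ₂.2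
    calc _ ≤ ψ (x + y) := hle ⟨ψ, hψ⟩ _
      _ ≤ ψ x + ψ y := (hcS ψ hψ).map_add_le x y
      _ ≤ ψ₁.1 x + ψ₂.1 y := add_le_add (h₁ x) (h₂ y)
  · simp_rw [fun ψ : c => (hcS ψ ψ.2).map_nsmul n x]
    exact (Real.mul_iInf_of_nonneg (Nat.cast_nonneg n) _).symm

theorem IsSupSublinear.exists_addMonoidHom_le [IsOrderedAddMonoid α] {ψ₀ : α → ℝ}
    (hψ₀ : IsSupSublinear ψ₀) :
    ∃ φ : α →+ ℝ, (∀ x y, φ (x ⊔ y) = max (φ x) (φ y)) ∧ ∀ x, φ x ≤ ψ₀ x := by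
  -- Zorn's lemma in the dual order: a minimal sup-sublinear `ψ ≤ ψ₀`.
  obtain ⟨ψ, hψψ₀, hψ, hmin⟩ := zorn_le_nonempty₀ (α := (α → ℝ)ᵒᵈ) {ψ | IsSupSublinear ψ}
    (fun c hcS hc _ hψ₁ => IsChain.exists_isSupSublinear_le (c := c) hc.symm hcS hψ₁) ψ₀ hψ₀
  have hadd (y z : α) : ψ (y + z) = ψ y + ψ z := by
    refine le_antisymm (hψ.map_add_le y z) ?_
    have hder : ∀ x, ψ x ≤ dirDeriv ψ z x := hmin (hψ.dirDeriv z) (hψ.dirDeriv_le z)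
    calc ψ y + ψ z ≤ dirDeriv ψ z y + ψ z := add_le_add (hder y) le_rfl
      _ = dirDeriv ψ z (y + z) := (hψ.dirDeriv_add_self z y).symm
      _ ≤ ψ (y + z) := hψ.dirDeriv_le z _
  exact ⟨AddMonoidHom.mk' ψ hadd, hψ.map_sup, hψψ₀⟩

end Zorn

section Gauge

variable {α : Type*} [AddCommGroup α] [Lattice α] {E y z : α} {q r : ℚ}

/-- `y ≤ q • E`, stated without dividing in `α`. -/
def LeRatMul (E y : α) (q : ℚ) : Prop := q.den • y ≤ q.num • E

structure IsStrongUnit (E : α) : Prop where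
  nonneg : 0 ≤ E
  ne_zero : E ≠ 0
  exists_leRatMul : ∀ y : α, ∃ q : ℚ, LeRatMul E y q

noncomputable def upperGauge (E y : α) : ℝ := sInf (((↑) : ℚ → ℝ) '' {q | LeRatMul E y q})

lemma nonempty_upperGauge_set (hE : IsStrongUnit E) (y : α) :
    (((↑) : ℚ → ℝ) '' {q | LeRatMul E y q}).Nonempty :=
  let ⟨q, hq⟩ := hE.exists_leRatMul y
  ⟨q, q, hq, rfl⟩

lemma le_upperGauge (hE : IsStrongUnit E) {c : ℝ} (h : ∀ q, LeRatMul E y q → c ≤ q) :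
    c ≤ upperGauge E y :=
  le_csInf (nonempty_upperGauge_set hE y) (by rintro _ ⟨q, hq, rfl⟩; exact h q hq)

lemma exists_leRatMul_lt_of_upperGauge_lt (hE : IsStrongUnit E) {c : ℝ}
    (h : upperGauge E y < c) : ∃ q, LeRatMul E y q ∧ (q : ℝ) < c := by
  obtain ⟨_, ⟨q, hq, rfl⟩, hlt⟩ := exists_lt_of_csInf_lt (nonempty_upperGauge_set hE y) h
  exact ⟨q, hq, hlt⟩

variable [IsOrderedAddMonoid α]

lemma leRatMul_iff {a : ℤ} {b : ℕ} (hb : b ≠ 0) (hq : q = a / b) :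
    LeRatMul E y q ↔ b • y ≤ a • E := by
  have hcross : (b : ℤ) * q.num = q.den * a := by
    have : (b : ℚ) * q.num = q.den * a := by
      rw [← Rat.mul_den_eq_num q, hq]
      field_simp
    exact_mod_cast this
  have hE : b • q.num • E = q.den • a • E := by
    rw [← natCast_zsmul _ b, ← natCast_zsmul _ q.den, smul_smul, smul_smul, hcross]
  rw [LeRatMul, ← nsmul_le_nsmul_iff_of_ne_zero hb,
    ← nsmul_le_nsmul_iff_of_ne_zero (a := b • y) q.den_ne_zero, smul_comm b q.den y, hE]

lemma leRatMul_natCast_div_iff {a b : ℕ} (hb : b ≠ 0) :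
    LeRatMul E y (a / b) ↔ b • y ≤ a • E := by
  rw [leRatMul_iff hb (a := a) (by push_cast; rfl), natCast_zsmul]

lemma LeRatMul.add (hy : LeRatMul E y q) (hz : LeRatMul E z r) : LeRatMul E (y + z) (q + r) := by
  rw [leRatMul_iff (mul_ne_zero q.den_ne_zero r.den_ne_zero)
    (a := q.num * r.den + r.num * q.den)]
  · rw [LeRatMul] at hy hz
    calc (q.den * r.den) • (y + z) = r.den • q.den • y + q.den • r.den • z := by
          rw [smul_add, mul_nsmul, mul_comm, mul_nsmul]
      _ ≤ r.den • q.num • E + q.den • r.num • E :=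
          add_le_add (nsmul_le_nsmul_right hy _) (nsmul_le_nsmul_right hz _)
      _ = (q.num * r.den + r.num * q.den) • E := by
          rw [add_smul, mul_comm q.num, mul_comm r.num, mul_zsmul, mul_zsmul, natCast_zsmul,
            natCast_zsmul]
  · nth_rw 1 [← Rat.num_div_den q, ← Rat.num_div_den r]
    push_cast
    field_simp

lemma leRatMul_zero_iff (hE : IsStrongUnit E) : LeRatMul E 0 q ↔ 0 ≤ q := by
  rw [LeRatMul, nsmul_zero, ← Rat.num_nonneg]
  exact ⟨nonneg_of_zsmul_nonneg hE.nonneg hE.ne_zero, fun h => zsmul_nonneg hE.nonneg h⟩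

lemma LeRatMul.mono (hE : IsStrongUnit E) (h : LeRatMul E y q) (hqr : q ≤ r) :
    LeRatMul E y r := by
  simpa using h.add ((leRatMul_zero_iff hE).mpr (sub_nonneg.mpr hqr))

lemma LeRatMul.add_nonneg (hE : IsStrongUnit E) (hy : LeRatMul E y q)
    (hy' : LeRatMul E (-y) r) : 0 ≤ q + r :=
  (leRatMul_zero_iff hE).mp (by simpa using hy.add hy')

lemma LeRatMul.of_le (hyz : y ≤ z) (h : LeRatMul E z q) : LeRatMul E y q :=
  (nsmul_le_nsmul_right hyz _).trans h

lemma LeRatMul.sup (hy : LeRatMul E y q) (hz : LeRatMul E z q) : LeRatMul E (y ⊔ z) q := by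
  rw [LeRatMul, nsmul_sup]
  exact sup_le hy hz

lemma leRatMul_nsmul_iff {n : ℕ} (hn : n ≠ 0) : LeRatMul E (n • y) (n * q) ↔ LeRatMul E y q := by
  have hq : (n * q : ℚ) = (n * q.num : ℤ) / q.den := by
    nth_rw 1 [← Rat.num_div_den q]
    push_cast
    ring
  rw [leRatMul_iff q.den_ne_zero hq, LeRatMul, smul_comm, mul_zsmul, natCast_zsmul,
    nsmul_le_nsmul_iff_of_ne_zero hn]

lemma upperGauge_le (hE : IsStrongUnit E) (h : LeRatMul E y q) : upperGauge E y ≤ q := by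
  obtain ⟨r, hr⟩ := hE.exists_leRatMul (-y)
  refine csInf_le ⟨-r, ?_⟩ ⟨q, h, rfl⟩
  rintro _ ⟨q', hq', rfl⟩
  have : (0 : ℝ) ≤ q' + r := by exact_mod_cast hq'.add_nonneg hE hr
  linarith

lemma upperGauge_mono (hE : IsStrongUnit E) (h : y ≤ z) : upperGauge E y ≤ upperGauge E z :=
  le_upperGauge hE fun _ hq => upperGauge_le hE (hq.of_le h)

lemma upperGauge_sup (hE : IsStrongUnit E) (y z : α) :
    upperGauge E (y ⊔ z) = max (upperGauge E y) (upperGauge E z) := by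
  refine le_antisymm (le_of_forall_gt_imp_ge_of_dense fun c hc => ?_)
    (max_le (upperGauge_mono hE le_sup_left) (upperGauge_mono hE le_sup_right))
  obtain ⟨q, hq, hqc⟩ := exists_leRatMul_lt_of_upperGauge_lt hE ((le_max_left _ _).trans_lt hc)
  obtain ⟨r, hr, hrc⟩ := exists_leRatMul_lt_of_upperGauge_lt hE ((le_max_right _ _).trans_lt hc)
  calc upperGauge E (y ⊔ z) ≤ (max q r : ℚ) :=
        upperGauge_le hE ((hq.mono hE (le_max_left q r)).sup (hr.mono hE (le_max_right q r)))
    _ ≤ c := by push_cast; exact max_le hqc.le hrc.le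

lemma upperGauge_add_le (hE : IsStrongUnit E) (y z : α) :
    upperGauge E (y + z) ≤ upperGauge E y + upperGauge E z := by
  have h (q : ℚ) (hq : LeRatMul E y q) : upperGauge E (y + z) - q ≤ upperGauge E z :=
    le_upperGauge hE fun r hr => by
      have := upperGauge_le hE (hq.add hr)
      push_cast at this
      linarith
  have := le_upperGauge hE fun q hq => sub_le_comm.mp (h q hq)
  linarith

lemma upperGauge_zero (hE : IsStrongUnit E) : upperGauge E (0 : α) = 0 :=
  le_antisymm (by simpa using upperGauge_le hE ((leRatMul_zero_iff hE).mpr le_rfl))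
    (le_upperGauge hE fun q hq => by exact_mod_cast (leRatMul_zero_iff hE).mp hq)

lemma upperGauge_nsmul (hE : IsStrongUnit E) (n : ℕ) (y : α) :
    upperGauge E (n • y) = n * upperGauge E y := by
  rcases eq_or_ne n 0 with rfl | hn
  · simp [upperGauge_zero hE]
  have hn' : (0 : ℝ) < n := by positivity
  refine le_antisymm ?_ (le_upperGauge hE fun q hq => ?_)
  · rw [← div_le_iff₀' hn']
    refine le_upperGauge hE fun q hq => ?_
    rw [div_le_iff₀' hn']
    exact_mod_cast upperGauge_le hE ((leRatMul_nsmul_iff hn).mpr hq)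
  · rw [← le_div_iff₀' hn']
    have : LeRatMul E y (q / n) :=
      (leRatMul_nsmul_iff hn).mp (by rwa [mul_div_cancel₀ _ (by positivity)])
    exact_mod_cast upperGauge_le hE this

lemma isSupSublinear_upperGauge (hE : IsStrongUnit E) : IsSupSublinear (upperGauge E) :=
  ⟨upperGauge_sup hE, upperGauge_add_le hE, upperGauge_nsmul hE⟩

theorem exists_addMonoidHom_apply_eq_upperGauge (hE : IsStrongUnit E) (w : α) :
    ∃ φ : α →+ ℝ, (∀ x y, φ (x ⊔ y) = max (φ x) (φ y)) ∧ φ E = 1 ∧ φ w = upperGauge E w := by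
  have hg := isSupSublinear_upperGauge hE
  obtain ⟨φ, hφsup, hφle⟩ := (hg.dirDeriv w).exists_addMonoidHom_le
  have hle (x : α) : φ x ≤ upperGauge E x := (hφle x).trans (hg.dirDeriv_le w x)
  refine ⟨φ, hφsup, ?_, ?_⟩
  · have h₁ := (hle E).trans (upperGauge_le hE (q := 1) (by simp [LeRatMul]))
    have h₂ := (hle (-E)).trans (upperGauge_le hE (q := -1) (by simp [LeRatMul]))
    rw [map_neg] at h₂
    push_cast at h₁ h₂
    linarith
  · have := (hφle (-w)).trans (hg.dirDeriv_le_seq w (-w) 1)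
    simp only [one_smul, neg_add_cancel, upperGauge_zero hE, map_neg, Nat.cast_one, one_mul]
      at this
    linarith [hle w]

end Gauge

namespace CharOneSemifield

variable {F : Type*} [CharOneSemifield F] {E : F}

instance : Max F := ⟨oplus⟩

instance : SemilatticeSup F := SemilatticeSup.mk' oplus_comm oplus_assoc oplus_idem

instance : IsOrderedAddMonoid F where
  add_le_add_left X Y h Z := by
    change oplus X Y = Y at h
    show oplus (X + Z) (Y + Z) = Y + Z
    rw [add_comm X, add_comm Y, ← add_oplus, h]

instance : Lattice F where
  __ := (inferInstance : SemilatticeSup F)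
  inf X Y := -(-X ⊔ -Y)
  inf_le_left _ _ := neg_le.mpr le_sup_left
  inf_le_right _ _ := neg_le.mpr le_sup_right
  le_inf _ _ _ hY hZ := le_neg.mpr (sup_le (neg_le_neg hY) (neg_le_neg hZ))

lemma isStrongUnit_of_assumption1 (h1 : Assumption1 E) {X : F} (hX : X ≠ 0) :
    IsStrongUnit E := by
  obtain ⟨a, b, hb, hlo, hhi⟩ := h1 X
  change -(a • E) ≤ b • X at hlo
  change b • X ≤ a • E at hhi
  have haE : a • E ≠ 0 := by
    intro h
    rw [h, neg_zero] at hlo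
    rw [h] at hhi
    refine hX (le_antisymm ?_ ?_) <;>
      rwa [← nsmul_le_nsmul_iff_of_ne_zero hb.ne', nsmul_zero]
  have ha : a ≠ 0 := by
    rintro rfl
    exact haE (zero_nsmul E)
  have h0aE : 0 ≤ a • E := nonneg_of_nsmul_nonneg two_ne_zero
    (by rw [two_nsmul]; exact neg_le_iff_add_nonneg.mp (hlo.trans hhi))
  refine ⟨nonneg_of_nsmul_nonneg ha h0aE, fun h => haE (by rw [h, nsmul_zero]), fun Y => ?_⟩
  obtain ⟨a, b, hb, -, hY⟩ := h1 Y
  exact ⟨a / b, (leRatMul_natCast_div_iff hb.ne').mpr hY⟩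

lemma rval_nonneg (E X : F) : 0 ≤ rval E X :=
  Real.sInf_nonneg (by rintro _ ⟨a, b, -, rfl, -⟩; positivity)

lemma rval_eq_max_upperGauge (h1 : Assumption1 E) (hE : IsStrongUnit E) (Y : F) :
    rval E Y = max (upperGauge E Y) (upperGauge E (-Y)) := by
  refine le_antisymm (le_of_forall_gt_imp_ge_of_dense fun c hc => ?_) ?_
  · obtain ⟨q, hq, hqc⟩ := exists_leRatMul_lt_of_upperGauge_lt hE ((le_max_left _ _).trans_lt hc)
    obtain ⟨r, hr, hrc⟩ := exists_leRatMul_lt_of_upperGauge_lt hE ((le_max_right _ _).trans_lt hc)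
    obtain ⟨a, b, hb, hm⟩ : ∃ a b : ℕ, b ≠ 0 ∧ max q r = a / b := by
      have hm0 : 0 ≤ max q r := le_max_iff.mpr (by
        by_contra! h
        linarith [hq.add_nonneg hE hr])
      refine ⟨(max q r).num.toNat, (max q r).den, (max q r).den_ne_zero, ?_⟩
      have hnum : (((max q r).num.toNat : ℕ) : ℚ) = (max q r).num := by
        exact_mod_cast Int.toNat_of_nonneg (Rat.num_nonneg.mpr hm0)
      rw [hnum, Rat.num_div_den]
    have hY := (leRatMul_natCast_div_iff hb).mp (hm ▸ hq.mono hE (le_max_left q r))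
    have hnY := (leRatMul_natCast_div_iff hb).mp (hm ▸ hr.mono hE (le_max_right q r))
    calc rval E Y ≤ a / b :=
          csInf_le ⟨0, by rintro _ ⟨a, b, -, rfl, -⟩; positivity⟩
            ⟨a, b, Nat.pos_of_ne_zero hb, rfl, neg_le.mpr (by rwa [smul_neg] at hnY), hY⟩
      _ = (max q r : ℚ) := by rw [hm]; push_cast; rfl
      _ ≤ c := by push_cast; exact max_le hqc.le hrc.le
  · obtain ⟨a, b, hb, hlo, hhi⟩ := h1 Y
    refine le_csInf ⟨_, a, b, hb, rfl, hlo, hhi⟩ ?_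
    rintro _ ⟨a, b, hb, rfl, hlo, hhi⟩
    have h := upperGauge_le hE ((leRatMul_natCast_div_iff hb.ne').mpr hhi)
    have h' := upperGauge_le hE ((leRatMul_natCast_div_iff (y := -Y) hb.ne').mpr
      (by rw [smul_neg]; exact neg_le.mp hlo))
    push_cast at h h'
    exact max_le h h'

end CharOneSemifield

open CharOneSemifield

theorem stmt14_general {F : Type*} [CharOneSemifield F] (E : F)
    (h1 : Assumption1 E)
    (X : F) (hX : X ≠ 0) :
    ∃ φ ∈ specE E, |φ X| = rval E X := by
  have hE := isStrongUnit_of_assumption1 h1 hX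
  obtain ⟨W, hWr, hW⟩ : ∃ W, |upperGauge E W| = rval E X ∧ (W = X ∨ W = -X) := by
    rw [← abs_of_nonneg (rval_nonneg E X), rval_eq_max_upperGauge h1 hE]
    rcases max_choice (upperGauge E X) (upperGauge E (-X)) with h | h
    exacts [⟨X, by rw [h], Or.inl rfl⟩, ⟨-X, by rw [h], Or.inr rfl⟩]
  obtain ⟨φ, hφsup, hφE, hφW⟩ := exists_addMonoidHom_apply_eq_upperGauge hE W
  refine ⟨φ, ⟨⟨⟨E, by simp [hφE]⟩, hφsup, map_add φ⟩, hφE⟩, ?_⟩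
  rw [← hWr, ← hφW]
  rcases hW with rfl | rfl <;> simp

/-- for every `X ≠ 0` there is a normalized character with `|φ X| = r X`;
in particular the spectrum is non-empty. -/
theorem stmt14 {F : Type*} [CharOneSemifield F] (E : F)
    (h1 : Assumption1 E) (h2 : Assumption2 E) (hB : IsBanach E)
    (X : F) (hX : X ≠ 0) :
    ∃ φ ∈ specE E, |φ X| = rval E X :=
  stmt14_general E h1 X hX
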